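/- arXiv:1902.03273 — 3 statements merged into one kernel-verified Lean document; each statement's English description precedes it below -/
import Mathlib

section
/- Over propositional variables {q, p, p₁⁰,…,p_n⁰, p₁¹,…,p_n¹}, the 2^n formulas φ_ℓ = (p ∧ p₁^{ℓ₁} ∧ … ∧ p_n^{ℓ_n}) → q, indexed by binary strings ℓ ∈ {0,1}^n, are such that: (a) each φ_ℓ is entailed by p → q, and (b) no φ_ℓ is entailed by the conjunction of the others, i.e., for every ℓ, {φ_{ℓ'} : ℓ' ≠ ℓ} ⊭ φ_ℓ. -/
/-- The propositional variables `q`, `p`, and `p_j^b` for `j < n`, `b ∈ {0,1}`. -/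
inductive Var (n : ℕ) : Type
  | q : Var n
  | p : Var n
  | pv (j : Fin n) (b : Bool) : Var n

/-- The formula `φ_ℓ = (p ∧ p₁^{ℓ₁} ∧ … ∧ p_n^{ℓ_n}) → q`, evaluated at a valuation `v`. -/
def phi {n : ℕ} (ℓ : Fin n → Bool) (v : Var n → Bool) : Prop :=
  (v Var.p = true ∧ ∀ j : Fin n, v (Var.pv j (ℓ j)) = true) → v Var.q = true

namespace Var

variable {n : ℕ}

/-- The antecedent of `φ_{ℓ'}` holds in this valuation only for `ℓ' = ℓ`, so it satisfies every
`φ_{ℓ'}` with `ℓ' ≠ ℓ` vacuously while falsifying `φ_ℓ`. -/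
def separatingValuation (ℓ : Fin n → Bool) : Var n → Bool
  | q => false
  | p => true
  | pv j b => b == ℓ j

@[simp]
theorem separatingValuation_pv (ℓ : Fin n → Bool) (j : Fin n) (b : Bool) :
    separatingValuation ℓ (pv j b) = true ↔ b = ℓ j := by
  simp [separatingValuation]

end Var

open Var

theorem phi_of_imp {n : ℕ} (ℓ : Fin n → Bool) {v : Var n → Bool}
    (h : v Var.p = true → v Var.q = true) : phi ℓ v :=
  fun hant => h hant.1

theorem phi_separatingValuation_of_ne {n : ℕ} {ℓ ℓ' : Fin n → Bool} (hne : ℓ' ≠ ℓ) :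
    phi ℓ' (separatingValuation ℓ) :=
  fun hant => absurd (funext fun j => (separatingValuation_pv ℓ j (ℓ' j)).1 (hant.2 j)) hne

theorem not_phi_separatingValuation {n : ℕ} (ℓ : Fin n → Bool) :
    ¬ phi ℓ (separatingValuation ℓ) :=
  fun h => Bool.false_ne_true (h ⟨rfl, fun j => (separatingValuation_pv ℓ j (ℓ j)).2 rfl⟩)

/-- (a) each `φ_ℓ` is entailed by `p → q`; (b) no `φ_ℓ` is entailed by the conjunction of
the others. -/
theorem phi_family_properties (n : ℕ) :
    (∀ (ℓ : Fin n → Bool) (v : Var n → Bool),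
      (v Var.p = true → v Var.q = true) → phi ℓ v) ∧
    (∀ ℓ : Fin n → Bool,
      ¬ (∀ v : Var n → Bool, (∀ ℓ' : Fin n → Bool, ℓ' ≠ ℓ → phi ℓ' v) → phi ℓ v)) :=
  ⟨fun ℓ _ => phi_of_imp ℓ,
    fun ℓ h => not_phi_separatingValuation ℓ
      (h _ fun _ => phi_separatingValuation_of_ne)⟩
end

section
/- A conjunctive ELK formula φ (with modal prefixes collapsed, φ = φ^♭) is satisfiable if and only if: (1) the conjunction ω₀ ∧ ⋀{ω : K_σ ω ∈ φ} of all positively-boxed conjunctions together with the free part is satisfiable, and (2) for each negated conjunct ¬K_σ ω in φ, the formula ¬ω ∧ ⋀{ω' : K_{σ'} ω' ∈ φ and σ is a subword of σ'} is satisfiable. -/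
inductive PForm (P : Type) : Type
  | atom (p : P) : PForm P
  | neg (f : PForm P) : PForm P
  | conj (f g : PForm P) : PForm P

def peval {P : Type} (v : P → Prop) : PForm P → Prop
  | .atom p => v p
  | .neg f => ¬ peval v f
  | .conj f g => peval v f ∧ peval v g

def satKp {A W P : Type} (R : A → W → W → Prop) (V : W → P → Prop) :
    List A → PForm P → W → Prop
  | [], ω, w => peval (V w) ω
  | a :: σ, ω, w => ∀ v, R a w v → satKp R V σ ω v

namespace ElkAux

/-- Reachability along a word. -/
def Reach {A W : Type} (R : A → W → W → Prop) : List A → W → W → Prop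
  | [], w, u => w = u
  | a :: l, w, u => ∃ v, R a w v ∧ Reach R l v u

lemma peval_of_satKp {A W P : Type} {R : A → W → W → Prop} {V : W → P → Prop}
    (hrefl : ∀ a w, R a w w) :
    ∀ (l : List A) (ω : PForm P) (w : W), satKp R V l ω w → peval (V w) ω := by
  intro l
  induction l with
  | nil => intro ω w h; exact h
  | cons a l ih => intro ω w h; exact ih ω w (h w (hrefl a w))

lemma satKp_reach {A W P : Type} {R : A → W → W → Prop} {V : W → P → Prop} :
    ∀ (l : List A) (ω : PForm P) (w u : W),
      satKp R V l ω w → Reach R l w u → peval (V u) ω := by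
  intro l
  induction l with
  | nil => intro ω w u h hr; cases hr; exact h
  | cons a l ih =>
      intro ω w u h hr
      obtain ⟨v, hv, hr⟩ := hr
      exact ih ω v u (h v hv) hr

lemma reach_sublist {A W : Type} {R : A → W → W → Prop} (hrefl : ∀ a w, R a w w)
    {σ σ' : List A} (hs : σ.Sublist σ') :
    ∀ w u, Reach R σ w u → Reach R σ' w u := by
  induction hs with
  | slnil => intro w u h; exact h
  | cons a _ ih => intro w u h; exact ⟨w, hrefl a w, ih w u h⟩
  | cons_cons a _ ih =>
      intro w u h
      obtain ⟨v, hv, h⟩ := h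
      exact ⟨v, hv, ih v u h⟩

lemma exists_reach_of_not_satKp {A W P : Type} {R : A → W → W → Prop} {V : W → P → Prop} :
    ∀ (l : List A) (ω : PForm P) (w : W), ¬ satKp R V l ω w →
      ∃ u, Reach R l w u ∧ ¬ peval (V u) ω := by
  intro l
  induction l with
  | nil => intro ω w h; exact ⟨w, rfl, h⟩
  | cons a l ih =>
      intro ω w h
      rw [show satKp R V (a :: l) ω w = ∀ v, R a w v → satKp R V l ω v from rfl] at h
      push_neg at h
      obtain ⟨v, hv, h⟩ := h
      obtain ⟨u, hu, hu'⟩ := ih ω v h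
      exact ⟨u, ⟨v, hv, hu⟩, hu'⟩

lemma not_satKp_of_reach {A W P : Type} {R : A → W → W → Prop} {V : W → P → Prop}
    {l : List A} {ω : PForm P} {w u : W}
    (hr : Reach R l w u) (hu : ¬ peval (V u) ω) : ¬ satKp R V l ω w :=
  fun h => hu (satKp_reach l ω w u h hr)

lemma satKp_of_addr_step {A W P : Type} {R : A → W → W → Prop} {V : W → P → Prop}
    (f : W → List A)
    (hstep : ∀ a w w', R a w w' → f w' = f w ∨ f w' = f w ++ [a] ∨ f w = f w' ++ [a])
    (ω : PForm P) (σ' : List A) (Hgood : ∀ u, (f u).Sublist σ' → peval (V u) ω) :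
    ∀ (τ γ : List A) (w : W), γ ++ τ = σ' → (f w).Sublist γ → satKp R V τ ω w := by
  intro τ
  induction τ with
  | nil =>
      intro γ w hγ hw
      have : (f w).Sublist σ' := by
        rw [← hγ]; simpa using hw
      exact Hgood w this
  | cons a τ ih =>
      intro γ w hγ hw
      intro v hv
      apply ih (γ ++ [a]) v (by simpa using hγ)
      rcases hstep a w v hv with h | h | h
      · rw [h]; exact hw.trans (List.sublist_append_left γ [a])
      · rw [h]; exact hw.append (List.Sublist.refl [a])
      · have : (f v).Sublist (f w) := by
          rw [h]; exact List.sublist_append_left _ _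
        exact (this.trans hw).trans (List.sublist_append_left γ [a])

open Classical in
/-- Representative of the `a`-equivalence class of a world.
Worlds: `none` is the root; `some (j, i)` is the world of branch `j` at depth `i+1`. -/
noncomputable def rep {A : Type} (σf : ℕ → List A) (n : ℕ) (a : A) :
    Option (ℕ × ℕ) → Option (ℕ × ℕ)
  | none => none
  | some (j, i) =>
      if j < n ∧ ∃ h : i < (σf j).length, (σf j).get ⟨i, h⟩ = a then
        (if i = 0 then none else some (j, i - 1))
      else some (j, i)

def addr {A : Type} (σf : ℕ → List A) : Option (ℕ × ℕ) → List A
  | none => []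
  | some (j, i) => (σf j).take (i + 1)

lemma addr_rep {A : Type} (σf : ℕ → List A) (n : ℕ) (a : A) (w : Option (ℕ × ℕ)) :
    rep σf n a w = w ∨ addr σf w = addr σf (rep σf n a w) ++ [a] := by
  match w with
  | none => exact Or.inl rfl
  | some (j, i) =>
      by_cases hc : j < n ∧ ∃ h : i < (σf j).length, (σf j).get ⟨i, h⟩ = a
      · right
        obtain ⟨hj, hi, ha⟩ := hc
        have hrep : rep σf n a (some (j, i)) =
            (if i = 0 then none else some (j, i - 1)) := by
          simp only [rep]
          exact if_pos (⟨hj, hi, ha⟩ :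
            j < n ∧ ∃ h : i < (σf j).length, (σf j).get ⟨i, h⟩ = a)
        rw [hrep]
        rcases Nat.eq_zero_or_pos i with h0 | h0
        · subst h0
          simp only [addr, if_pos rfl]
          rw [List.take_succ]
          simp [List.getElem?_eq_getElem hi, ← ha, List.get_eq_getElem]
        · rw [if_neg (Nat.pos_iff_ne_zero.mp h0)]
          simp only [addr]
          have hi1 : i - 1 + 1 = i := Nat.succ_pred_eq_of_pos h0
          rw [hi1, List.take_succ]
          simp [List.getElem?_eq_getElem hi, ← ha, List.get_eq_getElem]
      · left
        simp only [rep, if_neg hc]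

lemma addr_rel {A : Type} (σf : ℕ → List A) (n : ℕ) (a : A) (w w' : Option (ℕ × ℕ))
    (h : rep σf n a w = rep σf n a w') :
    addr σf w' = addr σf w ∨ addr σf w' = addr σf w ++ [a] ∨
      addr σf w = addr σf w' ++ [a] := by
  rcases addr_rep σf n a w with h1 | h1 <;> rcases addr_rep σf n a w' with h2 | h2
  · left; rw [← h1, ← h2, h]
  · right; left; rw [h2, ← h, h1]
  · right; right; rw [h1, h, h2]
  · left; rw [h1, h2, ← h]

lemma rep_pos {A : Type} (σf : ℕ → List A) (n : ℕ) {j i : ℕ}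
    (hj : j < n) (hi : i < (σf j).length) :
    rep σf n ((σf j).get ⟨i, hi⟩) (some (j, i)) =
      (if i = 0 then none else some (j, i - 1)) := by
  simp only [rep]
  exact if_pos ⟨hj, hi, trivial⟩

lemma rep_neg {A : Type} (σf : ℕ → List A) (n : ℕ) {j i : ℕ} {a : A}
    (h : ¬ (j < n ∧ ∃ h : i < (σf j).length, (σf j).get ⟨i, h⟩ = a)) :
    rep σf n a (some (j, i)) = some (j, i) := by
  simp only [rep]
  exact if_neg h

open Classical in
/-- The valuation map of the constructed model. -/
noncomputable def Vmodel {A P : Type} (σf : ℕ → List A) (n : ℕ)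
    (v₀ : P → Prop) (vf : ℕ → P → Prop) : Option (ℕ × ℕ) → P → Prop
  | none => v₀
  | some (j, i) => if j < n ∧ i + 1 = (σf j).length then vf j else v₀

end ElkAux

/-- Correctness criterion for conjunctive ELK satisfiability: a conjunctive formula
`ω₀ ∧ ⋀ K_{σ} ω_{σ} ∧ ⋀ ¬K_{σ} ω_{σ}` (with modal prefixes nonempty and with no adjacent
repetitions, i.e. `φ = φ^♭`) is satisfiable in an S5 multi-agent Kripke model iff
(1) `ω₀ ∧ ⋀{ω : K_σ ω ∈ φ}` is satisfiable, and
(2) for each `¬K_σ ω ∈ φ`, `¬ω ∧ ⋀{ω' : K_{σ'} ω' ∈ φ, σ subword of σ'}` is satisfiable. -/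
theorem conjunctive_elk_sat_iff {A P : Type} (ω₀ : PForm P)
    (pos negs : List (List A × PForm P))
    (hpos : ∀ x ∈ pos, x.1 ≠ [] ∧ x.1.Chain' (· ≠ ·))
    (hnegs : ∀ x ∈ negs, x.1 ≠ [] ∧ x.1.Chain' (· ≠ ·)) :
    (∃ (W : Type) (R : A → W → W → Prop) (V : W → P → Prop) (I : W),
        (∀ a, Equivalence (R a)) ∧
        peval (V I) ω₀ ∧
        (∀ x ∈ pos, satKp R V x.1 x.2 I) ∧
        (∀ x ∈ negs, ¬ satKp R V x.1 x.2 I))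
    ↔
    ((∃ v : P → Prop, peval v ω₀ ∧ ∀ x ∈ pos, peval v x.2) ∧
     (∀ x ∈ negs, ∃ v : P → Prop, ¬ peval v x.2 ∧
        ∀ y ∈ pos, x.1.Sublist y.1 → peval v y.2)) := by
  classical
  constructor
  · -- forward direction
    rintro ⟨W, R, V, I, hequiv, h0, hposI, hnegI⟩
    have hrefl : ∀ a w, R a w w := fun a w => (hequiv a).refl w
    refine ⟨⟨V I, h0, fun x hx =>
      ElkAux.peval_of_satKp hrefl x.1 x.2 I (hposI x hx)⟩, ?_⟩
    intro x hx
    obtain ⟨u, hr, hu⟩ := ElkAux.exists_reach_of_not_satKp x.1 x.2 I (hnegI x hx)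
    refine ⟨V u, hu, fun y hy hsub => ?_⟩
    exact ElkAux.satKp_reach y.1 y.2 I u (hposI y hy)
      (ElkAux.reach_sublist hrefl hsub I u hr)
  · -- backward direction: construct the model
    rintro ⟨⟨v₀, hv0, hv0pos⟩, h2⟩
    set n := negs.length with hn
    set σf : ℕ → List A := fun j => (negs.getD j ([], ω₀)).1 with hσf
    have hσget : ∀ (j : Fin negs.length), σf j.1 = (negs.get j).1 := by
      intro j
      simp [hσf, List.getD_eq_getElem?_getD, List.getElem?_eq_getElem j.2]
    have hch : ∀ j : Fin negs.length, ∃ v : P → Prop,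
        ¬ peval v (negs.get j).2 ∧
        ∀ y ∈ pos, (negs.get j).1.Sublist y.1 → peval v y.2 :=
      fun j => h2 _ (negs.get_mem _)
    choose vfF hv1 hv2 using hch
    set vf : ℕ → P → Prop := fun j =>
      if h : j < negs.length then vfF ⟨j, h⟩ else v₀ with hvf
    set R : A → Option (ℕ × ℕ) → Option (ℕ × ℕ) → Prop := fun a w w' =>
      ElkAux.rep σf n a w = ElkAux.rep σf n a w' with hR
    set V : Option (ℕ × ℕ) → P → Prop := ElkAux.Vmodel σf n v₀ vf with hV
    have hVnone : V none = v₀ := rfl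
    have hrefl : ∀ a w, R a w w := fun a w => rfl
    have hstep : ∀ a w w', R a w w' →
        ElkAux.addr σf w' = ElkAux.addr σf w ∨
        ElkAux.addr σf w' = ElkAux.addr σf w ++ [a] ∨
        ElkAux.addr σf w = ElkAux.addr σf w' ++ [a] := by
      intro a w w' h
      exact ElkAux.addr_rel σf n a w w' h
    -- the valuation at any world with address a subword of a positive prefix is good
    have Hgood : ∀ y ∈ pos, ∀ u, (ElkAux.addr σf u).Sublist y.1 → peval (V u) y.2 := by
      intro y hy u hu
      match u with
      | none => exact hv0pos y hy
      | some (j, i) =>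
          rw [hV]
          show peval (ElkAux.Vmodel σf n v₀ vf (some (j, i))) y.2
          rw [show ElkAux.Vmodel σf n v₀ vf (some (j, i)) =
              (if j < n ∧ i + 1 = (σf j).length then vf j else v₀) from rfl]
          split_ifs with hfin
          · obtain ⟨hj, hlen⟩ := hfin
            have haddr : ElkAux.addr σf (some (j, i)) = σf j := by
              simp only [ElkAux.addr]
              rw [hlen]
              exact List.take_length
            rw [hvf]
            simp only [dif_pos (show j < negs.length from hj)]
            apply hv2 ⟨j, hj⟩ y hy
            rw [← hσget ⟨j, hj⟩]
            rw [haddr] at hu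
            exact hu
          · exact hv0pos y hy
    refine ⟨Option (ℕ × ℕ), R, V, none,
      fun a => ⟨fun _ => rfl, Eq.symm, Eq.trans⟩, by rw [hVnone]; exact hv0, ?_, ?_⟩
    · -- positives hold at the root
      intro y hy
      exact ElkAux.satKp_of_addr_step (ElkAux.addr σf) hstep y.2 y.1
        (Hgood y hy) y.1 [] none rfl (by simp [ElkAux.addr])
    · -- negatives are refuted
      intro x hx
      obtain ⟨j, hxj⟩ := List.mem_iff_get.mp hx
      obtain ⟨hxne, hxch⟩ := hnegs x hx
      have hL : σf j.1 = x.1 := by rw [hσget j, hxj]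
      have hLne : σf j.1 ≠ [] := by rw [hL]; exact hxne
      have hLch : (σf j.1).Chain' (· ≠ ·) := by rw [hL]; exact hxch
      have hLpos : 0 < (σf j.1).length := List.length_pos_iff.mpr hLne
      -- the chain of worlds along branch j
      set wfun : ℕ → Option (ℕ × ℕ) := fun k =>
        match k with | 0 => none | k + 1 => some (j.1, k) with hwfun
      have step : ∀ i (hi : i < (σf j.1).length),
          R ((σf j.1).get ⟨i, hi⟩) (wfun i) (wfun (i + 1)) := by
        intro i hi
        have hrepi1 : ElkAux.rep σf n ((σf j.1).get ⟨i, hi⟩) (wfun (i + 1)) = wfun i := by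
          show ElkAux.rep σf n ((σf j.1).get ⟨i, hi⟩) (some (j.1, i)) = wfun i
          rw [ElkAux.rep_pos σf n j.2 hi]
          rcases Nat.eq_zero_or_pos i with h0 | h0
          · subst h0; rfl
          · rw [if_neg (Nat.pos_iff_ne_zero.mp h0)]
            have h1 : i = (i - 1) + 1 := (Nat.succ_pred_eq_of_pos h0).symm
            rw [h1]
            rfl
        have hrepi : ElkAux.rep σf n ((σf j.1).get ⟨i, hi⟩) (wfun i) = wfun i := by
          rcases Nat.eq_zero_or_pos i with h0 | h0
          · subst h0; rfl
          · obtain ⟨k, hk⟩ := Nat.exists_eq_succ_of_ne_zero (Nat.pos_iff_ne_zero.mp h0)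
            subst hk
            show ElkAux.rep σf n ((σf j.1).get ⟨k + 1, hi⟩) (some (j.1, k)) = some (j.1, k)
            apply ElkAux.rep_neg σf n
            rintro ⟨-, hk', hka⟩
            have hne := List.isChain_iff_getElem.mp hLch k (by omega)
            apply hne
            exact hka
        show ElkAux.rep σf n ((σf j.1).get ⟨i, hi⟩) (wfun i) =
          ElkAux.rep σf n ((σf j.1).get ⟨i, hi⟩) (wfun (i + 1))
        rw [hrepi, hrepi1]
      have reach : ∀ m i, i + m = (σf j.1).length →
          ElkAux.Reach R ((σf j.1).drop i) (wfun i) (wfun (σf j.1).length) := by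
        intro m
        induction m with
        | zero =>
            intro i hi
            rw [List.drop_of_length_le (by omega)]
            show wfun i = wfun (σf j.1).length
            rw [show i = (σf j.1).length from by omega]
        | succ m ih =>
            intro i hi
            have hilt : i < (σf j.1).length := by omega
            rw [List.drop_eq_getElem_cons hilt]
            exact ⟨wfun (i + 1), step i hilt, ih (i + 1) (by omega)⟩
      have hreach : ElkAux.Reach R x.1 none (wfun (σf j.1).length) := by
        have := reach (σf j.1).length 0 (by omega)
        rw [List.drop_zero] at this
        rw [← hL]
        exact this
      -- the final world refutes
      obtain ⟨k, hk⟩ := Nat.exists_eq_succ_of_ne_zero (Nat.pos_iff_ne_zero.mp hLpos)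
      have hfinal : ¬ peval (V (wfun (σf j.1).length)) x.2 := by
        rw [hk]
        show ¬ peval (V (some (j.1, k))) x.2
        have hVfin : V (some (j.1, k)) = vf j.1 := by
          rw [hV]
          show ElkAux.Vmodel σf n v₀ vf (some (j.1, k)) = vf j.1
          rw [show ElkAux.Vmodel σf n v₀ vf (some (j.1, k)) =
              (if j.1 < n ∧ k + 1 = (σf j.1).length then vf j.1 else v₀) from rfl]
          rw [if_pos ⟨j.2, hk.symm⟩]
        rw [hVfin, hvf]
        simp only [dif_pos j.2]
        have : (⟨j.1, j.2⟩ : Fin negs.length) = j := rfl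
        rw [this]
        rw [show x.2 = (negs.get j).2 from by rw [hxj]]
        exact hv1 j
      exact ElkAux.not_satKp_of_reach hreach hfinal
end

section
/- For an S5 Kripke model (W, (R_i)) and designated world I, every boxed axiom K_{a₁}…K_{a_k} α true at (W, I) remains true in the submodel (W', (R_i ∩ W'×W')) at I, for any W' ⊆ W with I ∈ W'; and every boxed axiom false at (W, I) whose full falsification chain J₁,…,J_k is included in W' remains false at I in the submodel. Hence the submodel agrees with the original model on all such boxed axioms. -/
/-- Satisfaction of `K_{a₁}…K_{a_k} α` at a world, for a modal-free formula `α`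
(represented by its truth set). -/
def satK {A W : Type*} (R : A → W → W → Prop) : List A → (W → Prop) → W → Prop
  | [], α, w => α w
  | a :: σ, α, w => ∀ v, R a w v → satK R σ α v

lemma satK_aux1 {A W : Type*} (R : A → W → W → Prop) (W' : Set W) (α : W → Prop) :
    ∀ (σ : List A) (I : W) (hI : I ∈ W'), satK R σ α I →
      satK (fun a (x y : W') => R a x.val y.val) σ (fun x => α x.val) ⟨I, hI⟩
  | [], I, hI, h => h
  | a :: σ, I, hI, h => fun v hv => satK_aux1 R W' α σ v.val v.2 (h v.val hv)

lemma satK_aux2 {A W : Type*} (R : A → W → W → Prop) (W' : Set W) (α : W → Prop) :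
    ∀ (σ : List A) (I : W) (hI : I ∈ W') (J : Fin (σ.length + 1) → W), J 0 = I →
      (∀ m : Fin σ.length, R (σ.get m) (J m.castSucc) (J m.succ)) →
      ¬ α (J (Fin.last σ.length)) →
      (∀ m, J m ∈ W') →
      ¬ satK (fun a (x y : W') => R a x.val y.val) σ (fun x => α x.val) ⟨I, hI⟩
  | [], I, hI, J, h0, _, hlast, _ => by
      intro h
      exact hlast (by simpa [Fin.last, h0] using (by simpa only [satK] using h : α I))
  | a :: σ, I, hI, J, h0, hchain, hlast, hmem => by
      intro h
      have hR : R a I (J 1) := by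
        have := hchain ⟨0, Nat.succ_pos _⟩
        have e : ((⟨0, Nat.succ_pos _⟩ : Fin (σ.length + 1)).castSucc) = (0 : Fin (σ.length + 2)) := by
          ext; simp
        rw [e, h0] at this
        simpa [Fin.succ] using this
      have hs := h ⟨J 1, hmem 1⟩ hR
      refine satK_aux2 R W' α σ (J 1) (hmem 1) (fun i => J i.succ) rfl ?_ ?_
        (fun m => hmem m.succ) hs
      · intro m
        have := hchain m.succ
        rw [← Fin.succ_castSucc] at this
        exact this
      · simpa [Fin.succ_last] using hlast

/-- Passing to a submodel induced by `W' ⊆ W` (with `I ∈ W'`): every boxed axiom true at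
`(W, I)` remains true at `I` in the submodel; and every boxed axiom false at `(W, I)` whose
full falsification chain lies in `W'` remains false at `I` in the submodel. -/
theorem submodel_preserves_boxed_axioms {A W : Type*} (R : A → W → W → Prop)
    (hequiv : ∀ a, Equivalence (R a)) (W' : Set W) (σ : List A) (α : W → Prop)
    (I : W) (hI : I ∈ W') :
    (satK R σ α I →
      satK (fun a (x y : W') => R a x.val y.val) σ (fun x => α x.val) ⟨I, hI⟩) ∧
    (∀ J : Fin (σ.length + 1) → W, J 0 = I →
      (∀ m : Fin σ.length, R (σ.get m) (J m.castSucc) (J m.succ)) →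
      ¬ α (J (Fin.last σ.length)) →
      (∀ m, J m ∈ W') →
      ¬ satK (fun a (x y : W') => R a x.val y.val) σ (fun x => α x.val) ⟨I, hI⟩) :=
  ⟨satK_aux1 R W' α σ I hI, fun J h0 hc hl hm => satK_aux2 R W' α σ I hI J h0 hc hl hm⟩
end
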